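/- arXiv:0810.2157 — 2 statements merged into one kernel-verified Lean document; each statement's English description precedes it below -/
import Mathlib

section
/- Let 𝒜 be a finite irreducible set of real d×d matrices and p ≥ d−1. Then for every n ≥ 1, (ν_p(𝒜))^{−1/n} ‖𝒜ⁿ‖^{1/n} ≤ ρ(𝒜) ≤ ‖𝒜ⁿ‖^{1/n}, where ν_p(𝒜) = max{1, ‖𝒜‖^p} / χ_p(𝒜). -/
open Filter Set

/-- The set of all products of exactly `n` matrices from `𝒜`. -/
def prods {d : ℕ} (𝒜 : Set (Matrix (Fin d) (Fin d) ℝ)) (n : ℕ) :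
    Set (Matrix (Fin d) (Fin d) ℝ) :=
  {P | ∃ l : List (Matrix (Fin d) (Fin d) ℝ), l.length = n ∧ (∀ A ∈ l, A ∈ 𝒜) ∧ l.prod = P}

/-- `‖𝒜ⁿ‖`: the supremum of the norm `N` over all `n`-fold products from `𝒜`. -/
noncomputable def supN {d : ℕ} (N : Matrix (Fin d) (Fin d) ℝ → ℝ)
    (𝒜 : Set (Matrix (Fin d) (Fin d) ℝ)) (n : ℕ) : ℝ :=
  sSup (N '' prods 𝒜 n)

/-- The joint spectral radius of `𝒜` with respect to the matrix norm `N`,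
given by the generalized Gelfand formula. -/
noncomputable def jsr {d : ℕ} (N : Matrix (Fin d) (Fin d) ℝ → ℝ)
    (𝒜 : Set (Matrix (Fin d) (Fin d) ℝ)) : ℝ :=
  Filter.limsup (fun n : ℕ => (supN N 𝒜 n) ^ ((n : ℝ)⁻¹)) Filter.atTop

/-- A (matrix) norm: nonnegative, definite, absolutely homogeneous, subadditive. -/
def IsMatNorm {d : ℕ} (N : Matrix (Fin d) (Fin d) ℝ → ℝ) : Prop :=
  (∀ A, 0 ≤ N A) ∧ (∀ A, N A = 0 ↔ A = 0) ∧
  (∀ (c : ℝ) A, N (c • A) = |c| * N A) ∧ (∀ A B, N (A + B) ≤ N A + N B)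

/-- Products of at most `p` factors from `𝒜` (including the empty product `1`). -/
def prodsLe {d : ℕ} (𝒜 : Set (Matrix (Fin d) (Fin d) ℝ)) (p : ℕ) :
    Set (Matrix (Fin d) (Fin d) ℝ) :=
  ⋃ k ∈ Finset.range (p + 1), prods 𝒜 k

/-- A vector norm on `ℝ^d`: nonnegative, definite, absolutely homogeneous, subadditive. -/
def IsNorm {d : ℕ} (ν : (Fin d → ℝ) → ℝ) : Prop :=
  (∀ x, 0 ≤ ν x) ∧ (∀ x, ν x = 0 ↔ x = 0) ∧
  (∀ (a : ℝ) x, ν (a • x) = |a| * ν x) ∧ (∀ x y, ν (x + y) ≤ ν x + ν y)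

/-- Operator norm of a matrix induced by the vector norm `ν` on `ℝ^d`. -/
noncomputable def opNorm {d : ℕ} (ν : (Fin d → ℝ) → ℝ)
    (A : Matrix (Fin d) (Fin d) ℝ) : ℝ :=
  sSup ((fun x => ν (A.mulVec x)) '' {x | ν x = 1})

/-- `‖𝒜ⁿ‖` computed with the operator norm induced by `ν`. -/
noncomputable def supNu {d : ℕ} (ν : (Fin d → ℝ) → ℝ)
    (𝒜 : Set (Matrix (Fin d) (Fin d) ℝ)) (n : ℕ) : ℝ :=
  supN (opNorm ν) 𝒜 n

/-- The joint spectral radius computed with the operator norm induced by `ν`. -/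
noncomputable def jsrNu {d : ℕ} (ν : (Fin d → ℝ) → ℝ)
    (𝒜 : Set (Matrix (Fin d) (Fin d) ℝ)) : ℝ :=
  jsr (opNorm ν) 𝒜

/-- The `p`-measure of irreducibility (quasi-controllability) of `𝒜`
with respect to the vector norm `ν`:
`χ_p(𝒜) = inf_{ν x = 1} sup { t : S(t) ⊆ conv(𝒜_p(x) ∪ 𝒜_p(−x)) }`. -/
noncomputable def chi {d : ℕ} (ν : (Fin d → ℝ) → ℝ)
    (𝒜 : Set (Matrix (Fin d) (Fin d) ℝ)) (p : ℕ) : ℝ :=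
  sInf ((fun x => sSup {t : ℝ | 0 ≤ t ∧
      {y | ν y ≤ t} ⊆ convexHull ℝ
        (((fun A => A.mulVec x) '' prodsLe 𝒜 p) ∪
         ((fun A => A.mulVec (-x)) '' prodsLe 𝒜 p))}) '' {x | ν x = 1})

/-- `𝒜` is irreducible: the only common invariant subspaces are `⊥` and `⊤`. -/
def MatSetIrreducible {d : ℕ} (𝒜 : Set (Matrix (Fin d) (Fin d) ℝ)) : Prop :=
  ∀ L : Submodule ℝ (Fin d → ℝ), (∀ A ∈ 𝒜, ∀ x ∈ L, A.mulVec x ∈ L) → L = ⊥ ∨ L = ⊤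

/-!
The upper bound is of Fekete type: `k ↦ ‖𝒜ᵏ‖` is submultiplicative, so `‖𝒜ᵏ‖ ≤ K ‖𝒜ⁿ‖^{k/n}`
for large `k`, and the `k`-th roots have limsup at most `‖𝒜ⁿ‖^{1/n}`.

For the lower bound take `P ∈ 𝒜ᵐ`, `Q ∈ 𝒜ⁿ` and unit vectors `x`, `y` realizing `‖𝒜ᵐ‖ = ‖P x‖`
and `‖𝒜ⁿ‖ = ‖Q y‖`, and put `z = P x / ‖P x‖`. For `t < χ_p(𝒜)` the vector `t y` lies in the
convex hull of the vectors `± B z`, `B ∈ 𝒜_p`, and the convex function `w ↦ ‖Q w‖` is maximized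
there at some `± B z`, where it is at most `max{1, ‖𝒜‖^p} ‖𝒜^{m+n}‖ / ‖𝒜ᵐ‖`. Hence
`χ_p(𝒜) ‖𝒜ᵐ‖ ‖𝒜ⁿ‖ ≤ max{1, ‖𝒜‖^p} ‖𝒜^{m+n}‖`, and iterating gives
`(‖𝒜ⁿ‖ / ν_p(𝒜))^j ≤ ‖𝒜^{jn}‖` for all `j ≥ 1`.
-/

open scoped Pointwise Matrix Topology

theorem Set.Finite.pow {M : Type*} [Monoid M] {s : Set M} (hs : s.Finite) (n : ℕ) :
    (s ^ n).Finite := by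
  induction n with
  | zero => simp
  | succ n ih => rw [pow_succ]; exact ih.mul hs

section RootAsymptotics

variable {a : ℕ → ℝ}

theorem pow_le_pow_add_mul_max_inv_pow {b : ℝ} (hb : 0 ≤ b) {m r n : ℕ} (hm : m ≠ 0)
    (hr : r ≤ n) : b ^ m ≤ b ^ (m + r) * max 1 b⁻¹ ^ n := by
  rcases hb.eq_or_lt with rfl | hb
  · rw [zero_pow hm]; positivity
  calc b ^ m = b ^ (m + r) * b⁻¹ ^ r := by
        rw [pow_add, inv_pow, mul_inv_cancel_right₀ (pow_ne_zero r hb.ne')]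
    _ ≤ b ^ (m + r) * max 1 b⁻¹ ^ n := by
        gcongr
        calc b⁻¹ ^ r ≤ max 1 b⁻¹ ^ r := by gcongr; exact le_max_right _ _
          _ ≤ max 1 b⁻¹ ^ n := pow_le_pow_right₀ (le_max_left _ _) hr

theorem le_pow_mul_of_submul (ha : ∀ k, 0 ≤ a k) (hsub : ∀ m n, a (m + n) ≤ a m * a n)
    (n q r : ℕ) : a (n * q + r) ≤ a n ^ q * a r := by
  induction q with
  | zero => simp
  | succ q ih =>
    calc a (n * (q + 1) + r) = a (n + (n * q + r)) := by ring_nf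
      _ ≤ a n * a (n * q + r) := hsub _ _
      _ ≤ a n * (a n ^ q * a r) := by gcongr; exact ha n
      _ = a n ^ (q + 1) * a r := by ring

theorem le_pow_of_submul (ha : ∀ k, 0 ≤ a k) (hsub : ∀ m n, a (m + n) ≤ a m * a n)
    (h0 : a 0 ≤ 1) (k : ℕ) : a k ≤ a 1 ^ k :=
  calc a k = a (1 * k + 0) := by simp
    _ ≤ a 1 ^ k * a 0 := le_pow_mul_of_submul ha hsub 1 k 0
    _ ≤ a 1 ^ k := mul_le_of_le_one_right (pow_nonneg (ha 1) k) h0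

/-- With `b = a n ^ (1 / n)` and `k = n q + r`, `r < n`, the constant `K` absorbs both
`max_{r < n} a r` and the ratio `b ^ (n q) / b ^ k`. -/
theorem exists_eventually_le_mul_pow_of_submul (ha : ∀ k, 0 ≤ a k)
    (hsub : ∀ m n, a (m + n) ≤ a m * a n) {n : ℕ} (hn : n ≠ 0) :
    ∃ K > 0, ∀ᶠ k in atTop, a k ≤ K * (a n ^ (n : ℝ)⁻¹) ^ k := by
  set b := a n ^ (n : ℝ)⁻¹
  have hb : 0 ≤ b := Real.rpow_nonneg (ha n) _
  have hbn : b ^ n = a n := Real.rpow_inv_natCast_pow (ha n) hn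
  set C := 1 + ∑ r ∈ Finset.range n, a r
  have hC : ∀ r < n, a r ≤ C := fun r hr =>
    (Finset.single_le_sum (fun i _ => ha i) (Finset.mem_range.2 hr)).trans
      (le_add_of_nonneg_left zero_le_one)
  have hC0 : 0 < C := add_pos_of_pos_of_nonneg one_pos (Finset.sum_nonneg fun i _ => ha i)
  refine ⟨C * max 1 b⁻¹ ^ n, by positivity, ?_⟩
  filter_upwards [eventually_ge_atTop n] with k hk
  have hq : k / n ≠ 0 := (Nat.div_pos hk (Nat.pos_of_ne_zero hn)).ne'
  have hk' : n * (k / n) + k % n = k := Nat.div_add_mod k n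
  calc a k = a (n * (k / n) + k % n) := by rw [hk']
    _ ≤ a n ^ (k / n) * a (k % n) := le_pow_mul_of_submul ha hsub _ _ _
    _ ≤ b ^ (n * (k / n)) * C := by
        rw [pow_mul, hbn]
        gcongr
        · exact pow_nonneg (ha n) _
        · exact hC _ (Nat.mod_lt k (Nat.pos_of_ne_zero hn))
    _ ≤ b ^ k * max 1 b⁻¹ ^ n * C := by
        gcongr
        nth_rw 2 [← hk']
        exact pow_le_pow_add_mul_max_inv_pow hb (mul_ne_zero hn hq)
          (Nat.mod_lt k (Nat.pos_of_ne_zero hn)).le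
    _ = C * max 1 b⁻¹ ^ n * b ^ k := by ring

theorem eventually_rpow_inv_le_of_le_mul_pow (ha : ∀ k, 0 ≤ a k) {K b : ℝ} (hK : 0 < K)
    (hb : 0 ≤ b) (h : ∀ᶠ k in atTop, a k ≤ K * b ^ k) :
    ∀ᶠ k : ℕ in atTop, a k ^ (k : ℝ)⁻¹ ≤ K ^ (k : ℝ)⁻¹ * b := by
  filter_upwards [h, eventually_ne_atTop 0] with k hk hk0
  calc a k ^ (k : ℝ)⁻¹ ≤ (K * b ^ k) ^ (k : ℝ)⁻¹ := by gcongr; exact ha k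
    _ = K ^ (k : ℝ)⁻¹ * b := by
        rw [Real.mul_rpow hK.le (pow_nonneg hb k), Real.pow_rpow_inv_natCast hb hk0]

theorem tendsto_rpow_inv_mul {K : ℝ} (hK : 0 < K) (b : ℝ) :
    Tendsto (fun k : ℕ => K ^ (k : ℝ)⁻¹ * b) atTop (𝓝 b) := by
  have h := ((Real.continuousAt_const_rpow hK.ne').tendsto.comp
    tendsto_inv_atTop_nhds_zero_nat).mul_const b
  simpa [Function.comp_def] using h

theorem limsup_rpow_inv_le_of_submul (ha : ∀ k, 0 ≤ a k) (hsub : ∀ m n, a (m + n) ≤ a m * a n)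
    {n : ℕ} (hn : n ≠ 0) : limsup (fun k : ℕ => a k ^ (k : ℝ)⁻¹) atTop ≤ a n ^ (n : ℝ)⁻¹ := by
  obtain ⟨K, hK, hle⟩ := exists_eventually_le_mul_pow_of_submul ha hsub hn
  have hlim := tendsto_rpow_inv_mul hK (a n ^ (n : ℝ)⁻¹)
  calc limsup (fun k : ℕ => a k ^ (k : ℝ)⁻¹) atTop
      ≤ limsup (fun k : ℕ => K ^ (k : ℝ)⁻¹ * a n ^ (n : ℝ)⁻¹) atTop :=
        limsup_le_limsup
          (eventually_rpow_inv_le_of_le_mul_pow ha hK (Real.rpow_nonneg (ha n) _) hle)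
          (isBoundedUnder_of ⟨0, fun k => Real.rpow_nonneg (ha k) _⟩).isCoboundedUnder_le
          hlim.isBoundedUnder_le
    _ = a n ^ (n : ℝ)⁻¹ := hlim.limsup_eq

theorem isBoundedUnder_rpow_inv_of_submul (ha : ∀ k, 0 ≤ a k)
    (hsub : ∀ m n, a (m + n) ≤ a m * a n) :
    IsBoundedUnder (· ≤ ·) atTop (fun k : ℕ => a k ^ (k : ℝ)⁻¹) := by
  obtain ⟨K, hK, hle⟩ := exists_eventually_le_mul_pow_of_submul ha hsub one_ne_zero
  exact (tendsto_rpow_inv_mul hK _).isBoundedUnder_le.mono_le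
    (eventually_rpow_inv_le_of_le_mul_pow ha hK (Real.rpow_nonneg (ha 1) _) hle)

theorem pow_succ_le_of_supermul (ha : ∀ k, 0 ≤ a k) (hsub : ∀ m n, a (m + n) ≤ a m * a n)
    {κ : ℝ} (hκ : 0 ≤ κ) (hsup : ∀ m n, κ * a m * a n ≤ a (m + n)) (n j : ℕ) :
    (κ * a n) ^ (j + 1) ≤ a ((j + 1) * n) := by
  induction j with
  | zero =>
    -- `κ ≤ 1` as soon as `a n ≠ 0`, by comparing `hsup` and `hsub` at `(n, n)`
    rcases (ha n).eq_or_lt with h | h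
    · simp [← h]
    · have : κ * a n * a n ≤ a n * a n := (hsup n n).trans (hsub n n)
      simpa using le_of_mul_le_mul_right this h
  | succ j ih =>
    calc (κ * a n) ^ (j + 1 + 1) = (κ * a n) ^ (j + 1) * (κ * a n) := pow_succ _ _
      _ ≤ a ((j + 1) * n) * (κ * a n) := by gcongr; exact mul_nonneg hκ (ha n)
      _ = κ * a ((j + 1) * n) * a n := by ring
      _ ≤ a ((j + 1) * n + n) := hsup _ _
      _ = a ((j + 1 + 1) * n) := by ring_nf

theorem le_limsup_rpow_inv_of_supermul (ha : ∀ k, 0 ≤ a k)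
    (hsub : ∀ m n, a (m + n) ≤ a m * a n) {κ : ℝ} (hκ : 0 ≤ κ)
    (hsup : ∀ m n, κ * a m * a n ≤ a (m + n)) {n : ℕ} (hn : n ≠ 0) :
    (κ * a n) ^ (n : ℝ)⁻¹ ≤ limsup (fun k : ℕ => a k ^ (k : ℝ)⁻¹) atTop := by
  have hc : 0 ≤ κ * a n := mul_nonneg hκ (ha n)
  refine le_limsup_of_frequently_le (frequently_atTop.2 fun i => ⟨(i + 1) * n, ?_, ?_⟩)
    (isBoundedUnder_rpow_inv_of_submul ha hsub)
  · nlinarith [Nat.pos_of_ne_zero hn]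
  · calc (κ * a n) ^ (n : ℝ)⁻¹
        = ((κ * a n) ^ (i + 1)) ^ ((((i + 1) * n : ℕ) : ℝ)⁻¹) := by
          rw [← Real.rpow_natCast, ← Real.rpow_mul hc]
          congr 1
          push_cast
          field_simp
      _ ≤ a ((i + 1) * n) ^ ((((i + 1) * n : ℕ) : ℝ)⁻¹) := by
          gcongr
          exact pow_succ_le_of_supermul ha hsub hκ hsup n i

end RootAsymptotics

namespace IsNorm

variable {d : ℕ} {ν : (Fin d → ℝ) → ℝ}

def toSeminorm (hν : IsNorm ν) : Seminorm ℝ (Fin d → ℝ) :=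
  Seminorm.of ν hν.2.2.2 fun a x => by rw [hν.2.2.1, Real.norm_eq_abs]

theorem map_smul_of_nonneg (hν : IsNorm ν) {c : ℝ} (hc : 0 ≤ c) (x : Fin d → ℝ) :
    ν (c • x) = c * ν x := by
  rw [hν.2.2.1, abs_of_nonneg hc]

theorem map_neg (hν : IsNorm ν) (x : Fin d → ℝ) : ν (-x) = ν x :=
  map_neg_eq_map hν.toSeminorm x

theorem pos_of_ne_zero (hν : IsNorm ν) {x : Fin d → ℝ} (hx : x ≠ 0) : 0 < ν x :=
  (hν.1 x).lt_of_ne' (mt (hν.2.1 x).1 hx)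

theorem map_inv_smul_self (hν : IsNorm ν) {x : Fin d → ℝ} (hx : x ≠ 0) :
    ν ((ν x)⁻¹ • x) = 1 := by
  rw [hν.map_smul_of_nonneg (inv_nonneg.2 (hν.1 x)), inv_mul_cancel₀ (hν.pos_of_ne_zero hx).ne']

theorem continuous (hν : IsNorm ν) : Continuous ν :=
  hν.toSeminorm.convexOn.locallyLipschitz.continuous

theorem convexOn_mulVec (hν : IsNorm ν) (Q : Matrix (Fin d) (Fin d) ℝ) :
    ConvexOn ℝ univ fun w => ν (Q *ᵥ w) :=
  (hν.toSeminorm.comp Q.mulVecLin).convexOn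

/-- `c` is the minimum of `ν` on the compact unit sphere of the sup norm. -/
theorem exists_pos_mul_norm_le (hν : IsNorm ν) : ∃ c > 0, ∀ x, c * ‖x‖ ≤ ν x := by
  obtain ⟨c, hc, hle⟩ := (isCompact_sphere (0 : Fin d → ℝ) 1).exists_forall_le'
    hν.continuous.continuousOn fun x hx =>
      hν.pos_of_ne_zero (ne_zero_of_mem_sphere one_ne_zero ⟨x, hx⟩)
  refine ⟨c, hc, fun x => ?_⟩
  rcases eq_or_ne x 0 with rfl | hx
  · simp [(hν.2.1 0).2 rfl]
  have hx' : 0 < ‖x‖ := norm_pos_iff.2 hx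
  have hu : ‖x‖⁻¹ • x ∈ Metric.sphere (0 : Fin d → ℝ) 1 := by
    simp [norm_smul, hx'.ne']
  calc c * ‖x‖ ≤ ν (‖x‖⁻¹ • x) * ‖x‖ := by gcongr; exact hle _ hu
    _ = ν x := by
        rw [hν.map_smul_of_nonneg (inv_nonneg.2 hx'.le), mul_comm, mul_inv_cancel_left₀ hx'.ne']

theorem isCompact_sphere (hν : IsNorm ν) : IsCompact {x | ν x = 1} := by
  obtain ⟨c, hc, hle⟩ := hν.exists_pos_mul_norm_le
  refine (ProperSpace.isCompact_closedBall (0 : Fin d → ℝ) c⁻¹).of_isClosed_subset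
    (isClosed_eq hν.continuous continuous_const) fun x hx => ?_
  rw [mem_closedBall_zero_iff, ← mul_one c⁻¹, le_inv_mul_iff₀ hc, ← hx]
  exact hle x

end IsNorm

section OperatorNorm

variable {d : ℕ} {ν : (Fin d → ℝ) → ℝ}

theorem opNorm_one_le : opNorm ν 1 ≤ 1 :=
  Real.sSup_le (by rintro _ ⟨x, hx, rfl⟩; simpa using hx.le) zero_le_one

namespace IsNorm

theorem opNorm_nonneg (hν : IsNorm ν) (A : Matrix (Fin d) (Fin d) ℝ) : 0 ≤ opNorm ν A :=
  Real.sSup_nonneg (by rintro _ ⟨x, -, rfl⟩; exact hν.1 _)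

theorem isCompact_image_sphere (hν : IsNorm ν) (A : Matrix (Fin d) (Fin d) ℝ) :
    IsCompact ((fun x => ν (A *ᵥ x)) '' {x | ν x = 1}) :=
  hν.isCompact_sphere.image (hν.continuous.comp (continuous_const.matrix_mulVec continuous_id))

theorem apply_mulVec_le_opNorm (hν : IsNorm ν) (A : Matrix (Fin d) (Fin d) ℝ)
    {x : Fin d → ℝ} (hx : ν x = 1) : ν (A *ᵥ x) ≤ opNorm ν A :=
  le_csSup (hν.isCompact_image_sphere A).bddAbove ⟨x, hx, rfl⟩

theorem apply_mulVec_le (hν : IsNorm ν) (A : Matrix (Fin d) (Fin d) ℝ) (x : Fin d → ℝ) :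
    ν (A *ᵥ x) ≤ opNorm ν A * ν x := by
  rcases eq_or_ne x 0 with rfl | hx
  · simp [(hν.2.1 0).2 rfl]
  have hνx := hν.pos_of_ne_zero hx
  calc ν (A *ᵥ x) = ν (A *ᵥ (ν x)⁻¹ • x) * ν x := by
        rw [Matrix.mulVec_smul, hν.map_smul_of_nonneg (inv_nonneg.2 hνx.le),
          mul_comm (ν x)⁻¹, inv_mul_cancel_right₀ hνx.ne']
    _ ≤ opNorm ν A * ν x := by
        gcongr
        exact hν.apply_mulVec_le_opNorm A (hν.map_inv_smul_self hx)

theorem opNorm_mul_le (hν : IsNorm ν) (A B : Matrix (Fin d) (Fin d) ℝ) :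
    opNorm ν (A * B) ≤ opNorm ν A * opNorm ν B := by
  refine Real.sSup_le ?_ (mul_nonneg (hν.opNorm_nonneg A) (hν.opNorm_nonneg B))
  rintro _ ⟨x, hx, rfl⟩
  calc ν ((A * B) *ᵥ x) ≤ opNorm ν A * ν (B *ᵥ x) := by
        rw [← Matrix.mulVec_mulVec]; exact hν.apply_mulVec_le A _
    _ ≤ opNorm ν A * opNorm ν B := by
        gcongr
        · exact hν.opNorm_nonneg A
        · exact hν.apply_mulVec_le_opNorm B hx

theorem exists_apply_eq_opNorm (hν : IsNorm ν) {A : Matrix (Fin d) (Fin d) ℝ}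
    (hA : 0 < opNorm ν A) : ∃ x, ν x = 1 ∧ ν (A *ᵥ x) = opNorm ν A := by
  have hne : ((fun x => ν (A *ᵥ x)) '' {x | ν x = 1}).Nonempty :=
    Set.nonempty_iff_ne_empty.2 fun h => hA.ne' (by rw [opNorm, h, Real.sSup_empty])
  exact (hν.isCompact_image_sphere A).sSup_mem hne

end IsNorm

end OperatorNorm

section Products

variable {d : ℕ} {𝒜 : Set (Matrix (Fin d) (Fin d) ℝ)}

theorem prods_eq_pow (n : ℕ) : prods 𝒜 n = 𝒜 ^ n := by
  induction n with
  | zero =>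
    ext P
    simp [prods, List.length_eq_zero_iff, eq_comm]
  | succ n ih =>
    ext P
    rw [pow_succ', ← ih]
    constructor
    · rintro ⟨_ | ⟨A, l⟩, hl, hmem, rfl⟩
      · simp at hl
      · exact ⟨A, hmem A List.mem_cons_self, l.prod,
          ⟨l, by simpa using hl, fun B hB => hmem B (List.mem_cons_of_mem A hB), rfl⟩, rfl⟩
    · rintro ⟨A, hA, _, ⟨l, hl, hmem, rfl⟩, rfl⟩
      exact ⟨A :: l, by simp [hl], by simpa [hA] using hmem, rfl⟩

theorem mem_prodsLe {p : ℕ} {B : Matrix (Fin d) (Fin d) ℝ} :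
    B ∈ prodsLe 𝒜 p ↔ ∃ k ≤ p, B ∈ 𝒜 ^ k := by
  simp [prodsLe, prods_eq_pow]

end Products

section SupNorm

variable {d : ℕ} {ν : (Fin d → ℝ) → ℝ} {𝒜 : Set (Matrix (Fin d) (Fin d) ℝ)}

theorem supNu_eq (n : ℕ) : supNu ν 𝒜 n = sSup (opNorm ν '' 𝒜 ^ n) := by
  rw [supNu, supN, prods_eq_pow]

theorem supNu_zero_le_one : supNu ν 𝒜 0 ≤ 1 := by
  rw [supNu_eq, pow_zero, Set.image_one, csSup_singleton]
  exact opNorm_one_le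

theorem opNorm_le_supNu (hfin : 𝒜.Finite) {n : ℕ} {P : Matrix (Fin d) (Fin d) ℝ}
    (hP : P ∈ 𝒜 ^ n) : opNorm ν P ≤ supNu ν 𝒜 n := by
  rw [supNu_eq]
  exact le_csSup ((hfin.pow n).image _).bddAbove ⟨P, hP, rfl⟩

theorem exists_opNorm_eq_supNu (hfin : 𝒜.Finite) {n : ℕ} (h : 0 < supNu ν 𝒜 n) :
    ∃ P ∈ 𝒜 ^ n, opNorm ν P = supNu ν 𝒜 n := by
  rw [supNu_eq] at h ⊢
  have hne : (opNorm ν '' 𝒜 ^ n).Nonempty :=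
    Set.nonempty_iff_ne_empty.2 fun he => h.ne' (by rw [he, Real.sSup_empty])
  exact hne.csSup_mem ((hfin.pow n).image _)

namespace IsNorm

theorem supNu_nonneg (hν : IsNorm ν) (n : ℕ) : 0 ≤ supNu ν 𝒜 n :=
  Real.sSup_nonneg (by rintro _ ⟨P, -, rfl⟩; exact hν.opNorm_nonneg P)

theorem supNu_add_le_mul (hν : IsNorm ν) (hfin : 𝒜.Finite) (m n : ℕ) :
    supNu ν 𝒜 (m + n) ≤ supNu ν 𝒜 m * supNu ν 𝒜 n := by
  rw [supNu_eq (m + n), pow_add]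
  refine Real.sSup_le ?_ (mul_nonneg (hν.supNu_nonneg m) (hν.supNu_nonneg n))
  rintro _ ⟨_, ⟨P, hP, Q, hQ, rfl⟩, rfl⟩
  calc opNorm ν (P * Q) ≤ opNorm ν P * opNorm ν Q := hν.opNorm_mul_le P Q
    _ ≤ supNu ν 𝒜 m * supNu ν 𝒜 n := mul_le_mul (opNorm_le_supNu hfin hP)
        (opNorm_le_supNu hfin hQ) (hν.opNorm_nonneg Q) (hν.supNu_nonneg m)

theorem supNu_le_max_one_pow (hν : IsNorm ν) (hfin : 𝒜.Finite) {k p : ℕ} (hk : k ≤ p) :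
    supNu ν 𝒜 k ≤ max 1 (supNu ν 𝒜 1 ^ p) := by
  refine (le_pow_of_submul hν.supNu_nonneg (hν.supNu_add_le_mul hfin) supNu_zero_le_one
    k).trans ?_
  rcases le_total (supNu ν 𝒜 1) 1 with h | h
  · exact (pow_le_one₀ (hν.supNu_nonneg 1) h).trans (le_max_left _ _)
  · exact (pow_le_pow_right₀ h hk).trans (le_max_right _ _)

end IsNorm

end SupNorm

section Irreducibility

variable {d : ℕ} {ν : (Fin d → ℝ) → ℝ} {𝒜 : Set (Matrix (Fin d) (Fin d) ℝ)} {p : ℕ}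

theorem chi_nonneg : 0 ≤ chi ν 𝒜 p :=
  Real.sInf_nonneg (by rintro _ ⟨x, -, rfl⟩; exact Real.sSup_nonneg fun t ht => ht.1)

namespace IsNorm

theorem ball_subset_convexHull_of_lt_chi (hν : IsNorm ν) {z : Fin d → ℝ} (hz : ν z = 1)
    {t : ℝ} (ht : t < chi ν 𝒜 p) :
    {y | ν y ≤ t} ⊆
      convexHull ℝ ((fun A => A *ᵥ z) '' prodsLe 𝒜 p ∪ (fun A => A *ᵥ -z) '' prodsLe 𝒜 p) := by
  set H := convexHull ℝ ((fun A => A *ᵥ z) '' prodsLe 𝒜 p ∪ (fun A => A *ᵥ -z) '' prodsLe 𝒜 p)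
  set T := {t : ℝ | 0 ≤ t ∧ {y | ν y ≤ t} ⊆ H}
  have hle : chi ν 𝒜 p ≤ sSup T :=
    csInf_le ⟨0, by rintro _ ⟨x, -, rfl⟩; exact Real.sSup_nonneg fun t ht => ht.1⟩ ⟨z, hz, rfl⟩
  rcases T.eq_empty_or_nonempty with hT | hT
  · rw [hT, Real.sSup_empty] at hle
    exact fun y hy => absurd (hν.1 y) (not_le.2 (hy.trans_lt (ht.trans_le hle)))
  · obtain ⟨s, hs, hts⟩ := exists_lt_of_lt_csSup hT (ht.trans_le hle)
    exact fun y hy => hs.2 (hy.trans hts.le)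

/-- `t • y` lies in the convex hull for every `0 ≤ t < χ`, and the convex function `w ↦ ν (Q w)`
is maximized on that hull at one of its generators `± B z`. -/
theorem chi_mul_le (hν : IsNorm ν) {Q : Matrix (Fin d) (Fin d) ℝ} {y z : Fin d → ℝ} {R : ℝ}
    (hz : ν z = 1) (hy : ν y = 1) (hR : ∀ B ∈ prodsLe 𝒜 p, ν (Q *ᵥ B *ᵥ z) ≤ R) :
    chi ν 𝒜 p * ν (Q *ᵥ y) ≤ R := by
  have hR0 : 0 ≤ R :=
    (hν.1 _).trans (by simpa using hR 1 (mem_prodsLe.2 ⟨0, Nat.zero_le p, by simp⟩))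
  have key : ∀ t, 0 ≤ t → t < chi ν 𝒜 p → t * ν (Q *ᵥ y) ≤ R := by
    intro t ht0 ht
    have hty := hν.ball_subset_convexHull_of_lt_chi hz ht
      (show ν (t • y) ≤ t by rw [hν.map_smul_of_nonneg ht0, hy, mul_one])
    obtain ⟨w, hw, hle⟩ :=
      (hν.convexOn_mulVec Q).exists_ge_of_mem_convexHull (subset_univ _) hty
    rw [Matrix.mulVec_smul, hν.map_smul_of_nonneg ht0] at hle
    refine hle.trans ?_
    rcases hw with ⟨B, hB, rfl⟩ | ⟨B, hB, rfl⟩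
    · exact hR B hB
    · show ν (Q *ᵥ B *ᵥ -z) ≤ R
      rw [Matrix.mulVec_neg, Matrix.mulVec_neg, hν.map_neg]
      exact hR B hB
  by_contra! h
  have hc : 0 < ν (Q *ᵥ y) :=
    (hν.1 _).lt_of_ne fun hc => by rw [← hc, mul_zero] at h; linarith
  obtain ⟨t, hRt, htχ⟩ := exists_between ((div_lt_iff₀ hc).2 h)
  have := key t ((div_nonneg hR0 hc.le).trans hRt.le) htχ
  rw [div_lt_iff₀ hc] at hRt
  linarith

theorem chi_mul_supNu_mul_le (hν : IsNorm ν) (hfin : 𝒜.Finite) (m n : ℕ) :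
    chi ν 𝒜 p * supNu ν 𝒜 m * supNu ν 𝒜 n ≤ max 1 (supNu ν 𝒜 1 ^ p) * supNu ν 𝒜 (m + n) := by
  set M := max 1 (supNu ν 𝒜 1 ^ p)
  have hRHS : 0 ≤ M * supNu ν 𝒜 (m + n) :=
    mul_nonneg (zero_le_one.trans (le_max_left _ _)) (hν.supNu_nonneg _)
  rcases (hν.supNu_nonneg m).eq_or_lt with hm | hm
  · rwa [← hm, mul_zero, zero_mul]
  rcases (hν.supNu_nonneg n).eq_or_lt with hn | hn
  · rwa [← hn, mul_zero]
  obtain ⟨P, hP, hPm⟩ := exists_opNorm_eq_supNu hfin hm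
  obtain ⟨x, hx, hPx⟩ := hν.exists_apply_eq_opNorm (hPm ▸ hm)
  obtain ⟨Q, hQ, hQn⟩ := exists_opNorm_eq_supNu hfin hn
  obtain ⟨y, hy, hQy⟩ := hν.exists_apply_eq_opNorm (hQn ▸ hn)
  have hz : ν ((supNu ν 𝒜 m)⁻¹ • P *ᵥ x) = 1 := by
    rw [hν.map_smul_of_nonneg (inv_nonneg.2 hm.le), hPx, hPm, inv_mul_cancel₀ hm.ne']
  have hR : ∀ B ∈ prodsLe 𝒜 p, ν (Q *ᵥ B *ᵥ (supNu ν 𝒜 m)⁻¹ • P *ᵥ x) ≤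
      (supNu ν 𝒜 m)⁻¹ * (M * supNu ν 𝒜 (m + n)) := by
    intro B hB
    obtain ⟨k, hk, hBk⟩ := mem_prodsLe.1 hB
    have hQBP : Q * B * P ∈ 𝒜 ^ (k + (m + n)) := by
      have := Set.mul_mem_mul (Set.mul_mem_mul hQ hBk) hP
      rwa [← pow_add, ← pow_add, show n + k + m = k + (m + n) by ring] at this
    rw [Matrix.mulVec_smul, Matrix.mulVec_smul, hν.map_smul_of_nonneg (inv_nonneg.2 hm.le),
      Matrix.mulVec_mulVec, Matrix.mulVec_mulVec]
    gcongr
    calc ν ((Q * B * P) *ᵥ x) ≤ opNorm ν (Q * B * P) := hν.apply_mulVec_le_opNorm _ hx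
      _ ≤ supNu ν 𝒜 (k + (m + n)) := opNorm_le_supNu hfin hQBP
      _ ≤ supNu ν 𝒜 k * supNu ν 𝒜 (m + n) := hν.supNu_add_le_mul hfin _ _
      _ ≤ M * supNu ν 𝒜 (m + n) := by
          gcongr
          · exact hν.supNu_nonneg _
          · exact hν.supNu_le_max_one_pow hfin hk
  have h := hν.chi_mul_le hz hy hR
  rw [hQy, hQn, le_inv_mul_iff₀ hm] at h
  linarith

end IsNorm

end Irreducibility

theorem statement9_general {d : ℕ} (𝒜 : Finset (Matrix (Fin d) (Fin d) ℝ))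
    (ν : (Fin d → ℝ) → ℝ) (hν : IsNorm ν)
    (p : ℕ) (n : ℕ) (hn : 1 ≤ n) :
    ((max 1 ((supNu ν (↑𝒜 : Set (Matrix (Fin d) (Fin d) ℝ)) 1) ^ p) /
        chi ν (↑𝒜 : Set (Matrix (Fin d) (Fin d) ℝ)) p) ^ ((n : ℝ)⁻¹))⁻¹ *
      (supNu ν (↑𝒜 : Set (Matrix (Fin d) (Fin d) ℝ)) n) ^ ((n : ℝ)⁻¹) ≤
      jsrNu ν (↑𝒜 : Set (Matrix (Fin d) (Fin d) ℝ)) ∧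
    jsrNu ν (↑𝒜 : Set (Matrix (Fin d) (Fin d) ℝ)) ≤
      (supNu ν (↑𝒜 : Set (Matrix (Fin d) (Fin d) ℝ)) n) ^ ((n : ℝ)⁻¹) := by
  have hfin := 𝒜.finite_toSet
  have hn0 : n ≠ 0 := Nat.one_le_iff_ne_zero.1 hn
  set a := supNu ν (↑𝒜 : Set (Matrix (Fin d) (Fin d) ℝ))
  set M := max 1 (a 1 ^ p)
  have hM : 0 < M := zero_lt_one.trans_le (le_max_left _ _)
  have hsup : ∀ k l, chi ν 𝒜 p / M * a k * a l ≤ a (k + l) := fun k l => by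
    rw [mul_assoc, div_mul_eq_mul_div, div_le_iff₀ hM, ← mul_assoc, mul_comm _ M]
    exact hν.chi_mul_supNu_mul_le hfin k l
  refine ⟨?_, limsup_rpow_inv_le_of_submul hν.supNu_nonneg (hν.supNu_add_le_mul hfin) hn0⟩
  -- `((M / χ) ^ n⁻¹)⁻¹ = (χ / M) ^ n⁻¹` holds also for `χ = 0`, as `M / 0 = 0`
  rw [← Real.inv_rpow (div_nonneg hM.le chi_nonneg), inv_div,
    ← Real.mul_rpow (div_nonneg chi_nonneg hM.le) (hν.supNu_nonneg n)]
  exact le_limsup_rpow_inv_of_supermul hν.supNu_nonneg (hν.supNu_add_le_mul hfin)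
    (div_nonneg chi_nonneg hM.le) hsup hn0

/-- main theorem, second part: for irreducible `𝒜` and `p ≥ d − 1`,
`(ν_p(𝒜))^{−1/n} ‖𝒜ⁿ‖^{1/n} ≤ ρ(𝒜) ≤ ‖𝒜ⁿ‖^{1/n}` with
`ν_p(𝒜) = max{1, ‖𝒜‖^p} / χ_p(𝒜)`. -/
theorem statement9 {d : ℕ} (𝒜 : Finset (Matrix (Fin d) (Fin d) ℝ)) (h𝒜 : 𝒜.Nonempty)
    (ν : (Fin d → ℝ) → ℝ) (hν : IsNorm ν)
    (hirr : MatSetIrreducible (↑𝒜 : Set (Matrix (Fin d) (Fin d) ℝ)))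
    (p : ℕ) (hp : d - 1 ≤ p) (n : ℕ) (hn : 1 ≤ n) :
    ((max 1 ((supNu ν (↑𝒜 : Set (Matrix (Fin d) (Fin d) ℝ)) 1) ^ p) /
        chi ν (↑𝒜 : Set (Matrix (Fin d) (Fin d) ℝ)) p) ^ ((n : ℝ)⁻¹))⁻¹ *
      (supNu ν (↑𝒜 : Set (Matrix (Fin d) (Fin d) ℝ)) n) ^ ((n : ℝ)⁻¹) ≤
      jsrNu ν (↑𝒜 : Set (Matrix (Fin d) (Fin d) ℝ)) ∧
    jsrNu ν (↑𝒜 : Set (Matrix (Fin d) (Fin d) ℝ)) ≤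
      (supNu ν (↑𝒜 : Set (Matrix (Fin d) (Fin d) ℝ)) n) ^ ((n : ℝ)⁻¹) :=
  statement9_general 𝒜 ν hν p n hn
end

section
/- For a finite bounded set 𝒜 of real d×d matrices with all matrices having nonnegative entries, and any n ≥ 1, the inequalities r^{−1/n} ρ(A₁^{⊗n} + ⋯ + A_r^{⊗n})^{1/n} ≤ ρ(𝒜) ≤ ρ(A₁^{⊗n} + ⋯ + A_r^{⊗n})^{1/n} hold, where A^{⊗n} denotes the n-fold Kronecker power of A. -/
/-!
Write `S = ∑ᵢ Aᵢ^{⊗n}`. Kronecker powers are multiplicative, so `Sᵐ = ∑_w (A_w)^{⊗n}` over the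
`rᵐ` words `w` of length `m`, where `A_w` is the corresponding product. For the `∞`-operator norm
`‖P^{⊗n}‖ = ‖P‖ⁿ`. All summands are entrywise nonnegative, so `‖A_w‖ⁿ ≤ ‖Sᵐ‖` for every word,
while the triangle inequality gives `‖Sᵐ‖ ≤ rᵐ max_w ‖A_w‖ⁿ`. After taking `(mn)`-th roots,
Gelfand's formula `ρ(S) = lim ‖Sᵐ‖^{1/m}` squeezes the `limsup` defining the joint spectral radius.
-/

open Filter Set

/-- The spectral radius of a single real matrix: the maximum of the moduli of
its (complex) eigenvalues. -/
noncomputable def specRad {m : Type*} [Fintype m] [DecidableEq m]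
    (A : Matrix m m ℝ) : ℝ :=
  (spectralRadius ℂ (A.map (algebraMap ℝ ℂ))).toReal

/-- The canonical operator norm of a matrix (induced by the sup norm on `ℝ^d`). -/
noncomputable def opNormC {d : ℕ} (A : Matrix (Fin d) (Fin d) ℝ) : ℝ :=
  ‖LinearMap.toContinuousLinearMap (Matrix.mulVecLin A)‖

/-- The `n`-fold Kronecker (tensor) power of a `d×d` matrix, realized as a matrix
indexed by `Fin n → Fin d`. -/
noncomputable def kronPow {d : ℕ} (A : Matrix (Fin d) (Fin d) ℝ) (n : ℕ) :
    Matrix (Fin n → Fin d) (Fin n → Fin d) ℝ :=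
  fun i j => ∏ k, A (i k) (j k)

open scoped NNReal Topology

attribute [local instance] Matrix.linftyOpSeminormedAddCommGroup Matrix.linftyOpNormedRing
  Matrix.linftyOpNormedAlgebra

section WordProd

variable {M ι : Type*}

def wordProd [Monoid M] (A : ι → M) {m : ℕ} (w : Fin m → ι) : M :=
  (List.ofFn fun k => A (w k)).prod

@[simp]
lemma wordProd_cons [Monoid M] (A : ι → M) {m : ℕ} (i : ι) (w : Fin m → ι) :
    wordProd A (Fin.cons i w : Fin (m + 1) → ι) = A i * wordProd A w := by
  simp [wordProd, List.ofFn_succ]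

lemma map_wordProd {N F : Type*} [Monoid M] [Monoid N] [FunLike F M N] [MonoidHomClass F M N]
    (f : F) (A : ι → M) {m : ℕ} (w : Fin m → ι) : f (wordProd A w) = wordProd (f ∘ A) w := by
  simp [wordProd, map_list_prod, List.map_ofFn, Function.comp_def]

lemma sum_pow_eq_sum_wordProd [Semiring M] [Fintype ι] (A : ι → M) (m : ℕ) :
    (∑ i, A i) ^ m = ∑ w : Fin m → ι, wordProd A w := by
  induction m with
  | zero => simp [wordProd]
  | succ m ih =>
    rw [pow_succ', ih, Finset.sum_mul_sum, ← Fintype.sum_prod_type',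
      ← (Fin.consEquiv fun _ => ι).sum_comp]
    simp [Fin.consEquiv]

end WordProd

lemma prods_range_eq {d : ℕ} {ι : Type*} (A : ι → Matrix (Fin d) (Fin d) ℝ) (m : ℕ) :
    prods (Set.range A) m = Set.range (wordProd A : (Fin m → ι) → _) := by
  ext P
  constructor
  · rintro ⟨l, rfl, hl, rfl⟩
    choose w hw using fun k : Fin l.length => hl _ (l.get_mem k)
    refine ⟨w, ?_⟩
    simp only [wordProd, hw, List.ofFn_get]
  · rintro ⟨w, rfl⟩
    exact ⟨_, List.length_ofFn, by simp, rfl⟩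

section Nonneg

variable {κ R : Type*} [Fintype κ] [DecidableEq κ] [Semiring R] [PartialOrder R]
  [IsOrderedRing R]

lemma Matrix.list_prod_nonneg {l : List (Matrix κ κ R)} (hl : ∀ M ∈ l, ∀ i j, 0 ≤ M i j)
    (i j : κ) : 0 ≤ l.prod i j := by
  induction l generalizing i j with
  | nil => by_cases h : i = j <;> simp [h]
  | cons M l ih =>
    rw [List.prod_cons, Matrix.mul_apply]
    exact Finset.sum_nonneg fun k _ => mul_nonneg (hl M (by simp) i k)
      (ih (fun M' hM' => hl M' (by simp [hM'])) k j)

lemma wordProd_nonneg {ι : Type*} {A : ι → Matrix κ κ R} (hA : ∀ a i j, 0 ≤ A a i j) {m : ℕ}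
    (w : Fin m → ι) (i j : κ) : 0 ≤ wordProd A w i j :=
  Matrix.list_prod_nonneg (by simp [hA]) i j

end Nonneg

noncomputable def kronPowHom (d n : ℕ) :
    Matrix (Fin d) (Fin d) ℝ →* Matrix (Fin n → Fin d) (Fin n → Fin d) ℝ where
  toFun A := kronPow A n
  map_one' := by
    ext i j
    simp only [kronPow, Matrix.one_apply]
    by_cases h : i = j
    · simp [h]
    · obtain ⟨k, hk⟩ := Function.ne_iff.mp h
      simpa [h] using Finset.prod_eq_zero (Finset.mem_univ k) (by simp [hk])
  map_mul' A B := by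
    ext i j
    simp only [kronPow, Matrix.mul_apply, Finset.prod_univ_sum, Fintype.piFinset_univ,
      Finset.prod_mul_distrib]

section KronPow

variable {d n : ℕ}

lemma kronPow_nonneg {A : Matrix (Fin d) (Fin d) ℝ} (hA : ∀ i j, 0 ≤ A i j)
    (i j : Fin n → Fin d) : 0 ≤ kronPow A n i j :=
  Finset.prod_nonneg fun k _ => hA (i k) (j k)

lemma pow_sum_kronPow {ι : Type*} [Fintype ι] (A : ι → Matrix (Fin d) (Fin d) ℝ) (m : ℕ) :
    (∑ a, kronPow (A a) n) ^ m = ∑ w : Fin m → ι, kronPow (wordProd A w) n := by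
  simp only [sum_pow_eq_sum_wordProd]
  exact Finset.sum_congr rfl fun w _ => (map_wordProd (kronPowHom d n) A w).symm

lemma NNReal.sup_prod_comp_eq_sup_pow {α : Type*} [Fintype α] (f : α → ℝ≥0) (n : ℕ) :
    Finset.univ.sup (fun x : Fin n → α => ∏ k, f (x k)) = Finset.univ.sup f ^ n := by
  refine le_antisymm (Finset.sup_le fun x _ => ?_) ?_
  · calc ∏ k, f (x k) ≤ ∏ _k : Fin n, Finset.univ.sup f :=
          Finset.prod_le_prod' fun k _ => Finset.le_sup (Finset.mem_univ _)
      _ = Finset.univ.sup f ^ n := by simp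
  rcases Nat.eq_zero_or_pos n with rfl | hn
  · simp
  rw [Finset.apply_sup_eq_sup_comp_of_linearOrder _ (pow_left_mono n) (zero_pow hn.ne')]
  exact Finset.sup_le fun a _ => Finset.le_sup_of_le (b := fun _ => a) (Finset.mem_univ _)
    (by simp)

lemma nnnorm_kronPow (A : Matrix (Fin d) (Fin d) ℝ) (n : ℕ) : ‖kronPow A n‖₊ = ‖A‖₊ ^ n := by
  have hrow (i : Fin n → Fin d) : ∑ j, ‖kronPow A n i j‖₊ = ∏ k, ∑ x, ‖A (i k) x‖₊ := by
    simp only [kronPow, nnnorm_prod]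
    exact (Fintype.prod_sum fun k x => ‖A (i k) x‖₊).symm
  simp only [Matrix.linfty_opNNNorm_def, hrow]
  exact NNReal.sup_prod_comp_eq_sup_pow (fun i => ∑ j, ‖A i j‖₊) n

lemma norm_kronPow (A : Matrix (Fin d) (Fin d) ℝ) (n : ℕ) : ‖kronPow A n‖ = ‖A‖ ^ n := by
  simpa using congrArg ((↑) : ℝ≥0 → ℝ) (nnnorm_kronPow A n)

end KronPow

lemma Matrix.linfty_opNorm_mono {m n α : Type*} [Fintype m] [Fintype n]
    [SeminormedAddCommGroup α] {X Y : Matrix m n α} (h : ∀ i j, ‖X i j‖ ≤ ‖Y i j‖) :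
    ‖X‖ ≤ ‖Y‖ := by
  rw [Matrix.linfty_opNorm_def, Matrix.linfty_opNorm_def, NNReal.coe_le_coe]
  exact Finset.sup_mono_fun fun i _ => Finset.sum_le_sum fun j _ => h i j

section SupN

variable {d : ℕ} {ι : Type*} (N : Matrix (Fin d) (Fin d) ℝ → ℝ) (A : ι → Matrix (Fin d) (Fin d) ℝ)
  {m : ℕ}

lemma supN_range_eq :
    supN N (Set.range A) m = sSup (Set.range fun w : Fin m → ι => N (wordProd A w)) := by
  rw [supN, prods_range_eq, ← Set.range_comp]
  rfl

lemma le_supN [Finite ι] (w : Fin m → ι) : N (wordProd A w) ≤ supN N (Set.range A) m := by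
  rw [supN_range_eq]
  exact le_csSup (Set.finite_range _).bddAbove ⟨w, rfl⟩

lemma supN_le {c : ℝ} (hc : 0 ≤ c) (h : ∀ w : Fin m → ι, N (wordProd A w) ≤ c) :
    supN N (Set.range A) m ≤ c := by
  rw [supN_range_eq]
  exact Real.sSup_le (Set.forall_mem_range.mpr h) hc

lemma supN_nonneg (hN : ∀ P, 0 ≤ N P) (m : ℕ) : 0 ≤ supN N (Set.range A) m :=
  Real.sSup_nonneg (by rintro _ ⟨P, _, rfl⟩; exact hN P)

end SupN

lemma opNormC_eq_norm {d : ℕ} : (opNormC : Matrix (Fin d) (Fin d) ℝ → ℝ) = (‖·‖) := by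
  ext P
  rw [opNormC, Matrix.linfty_opNorm_eq_opNorm]
  rfl

lemma tendsto_norm_pow_rpow_inv_specRad {ι : Type*} [Fintype ι] [DecidableEq ι]
    (M : Matrix ι ι ℝ) :
    Tendsto (fun m : ℕ => ‖M ^ m‖ ^ (m : ℝ)⁻¹) atTop (𝓝 (specRad M)) := by
  have : CompleteSpace (Matrix ι ι ℂ) := FiniteDimensional.complete ℂ _
  set f := (algebraMap ℝ ℂ).mapMatrix (m := ι)
  have hnorm (X : Matrix ι ι ℝ) : ‖f X‖₊ = ‖X‖₊ := by
    simp [f, Matrix.linfty_opNNNorm_def]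
  have hρ : spectralRadius ℂ (f M) ≠ ⊤ := ne_top_of_le_ne_top (by finiteness)
    (spectrum.spectralRadius_le_pow_nnnorm_pow_one_div ℂ (f M) 0)
  have h := (ENNReal.tendsto_toReal hρ).comp
    (spectrum.pow_nnnorm_pow_one_div_tendsto_nhds_spectralRadius (f M))
  refine h.congr fun m => ?_
  simp [← map_pow, hnorm, ← ENNReal.toReal_rpow]

lemma inv_mul_le_limsup_and_limsup_le {α : Type*} {l : Filter α} [l.NeBot] {g u : α → ℝ}
    {c L : ℝ} (hc : 0 ≤ c) (hg : 0 ≤ g) (hu : Tendsto u l (𝓝 L)) (hgu : g ≤ᶠ[l] u)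
    (hug : u ≤ᶠ[l] fun a => c * g a) : c⁻¹ * L ≤ limsup g l ∧ limsup g l ≤ L := by
  have hg_bdd : IsBoundedUnder (· ≤ ·) l g := hu.isBoundedUnder_le.mono_le hgu
  have hg_cobdd : IsCoboundedUnder (· ≤ ·) l g := isCoboundedUnder_le_of_le l hg
  have hmul : Monotone (c * ·) := monotone_mul_left_of_nonneg hc
  refine ⟨inv_mul_le_of_le_mul₀ hc ?_ ?_, ?_⟩
  · exact le_limsup_of_frequently_le (Frequently.of_forall hg) hg_bdd
  · calc L = limsup u l := hu.limsup_eq.symm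
      _ ≤ limsup (fun a => c * g a) l :=
          limsup_le_limsup hug hu.isCoboundedUnder_le (hmul.isBoundedUnder_le_comp hg_bdd)
      _ = c * limsup g l :=
          (hmul.map_limsup_of_continuousAt g (continuous_const_mul c).continuousAt hg_bdd
            hg_cobdd).symm
  · calc limsup g l ≤ limsup u l := limsup_le_limsup hgu hg_cobdd hu.isBoundedUnder_le
      _ = L := hu.limsup_eq

section KronPowBounds

variable {d n : ℕ} {ι : Type*} [Fintype ι] {A : ι → Matrix (Fin d) (Fin d) ℝ}

lemma supN_le_norm_pow_sum_kronPow_rpow (hA : ∀ a i j, 0 ≤ A a i j) (hn : n ≠ 0) (m : ℕ) :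
    supN (‖·‖) (Set.range A) m ≤ ‖(∑ a, kronPow (A a) n) ^ m‖ ^ (n : ℝ)⁻¹ := by
  refine supN_le _ A (by positivity) fun w => ?_
  have hterm (w' : Fin m → ι) (i j) : 0 ≤ kronPow (wordProd A w') n i j :=
    kronPow_nonneg (wordProd_nonneg hA w') i j
  have hpow : ‖wordProd A w‖ ^ n ≤ ‖(∑ a, kronPow (A a) n) ^ m‖ := by
    rw [← norm_kronPow, pow_sum_kronPow]
    refine Matrix.linfty_opNorm_mono fun i j => ?_
    rw [Matrix.sum_apply, Real.norm_of_nonneg (hterm w i j),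
      Real.norm_of_nonneg (Finset.sum_nonneg fun w' _ => hterm w' i j)]
    exact Finset.single_le_sum (f := fun w' => kronPow (wordProd A w') n i j)
      (fun w' _ => hterm w' i j) (Finset.mem_univ w)
  calc ‖wordProd A w‖ = (‖wordProd A w‖ ^ n) ^ (n : ℝ)⁻¹ :=
        (Real.pow_rpow_inv_natCast (norm_nonneg _) hn).symm
    _ ≤ _ := by gcongr

lemma norm_pow_sum_kronPow_le (A : ι → Matrix (Fin d) (Fin d) ℝ) (n m : ℕ) :
    ‖(∑ a, kronPow (A a) n) ^ m‖ ≤ Fintype.card ι ^ m * supN (‖·‖) (Set.range A) m ^ n := by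
  rw [pow_sum_kronPow]
  calc _ ≤ ∑ w : Fin m → ι, ‖kronPow (wordProd A w) n‖ := norm_sum_le _ _
    _ ≤ ∑ _w : Fin m → ι, supN (‖·‖) (Set.range A) m ^ n :=
        Finset.sum_le_sum fun w _ => by
          rw [norm_kronPow]
          exact pow_le_pow_left₀ (norm_nonneg _) (le_supN _ A w) n
    _ = _ := by simp

lemma supN_rpow_inv_le (hA : ∀ a i j, 0 ≤ A a i j) (hn : n ≠ 0) (m : ℕ) :
    supN (‖·‖) (Set.range A) m ^ (m : ℝ)⁻¹ ≤
      (‖(∑ a, kronPow (A a) n) ^ m‖ ^ (m : ℝ)⁻¹) ^ (n : ℝ)⁻¹ := by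
  calc _ ≤ (‖(∑ a, kronPow (A a) n) ^ m‖ ^ (n : ℝ)⁻¹) ^ (m : ℝ)⁻¹ := by
        gcongr
        · exact supN_nonneg _ A norm_nonneg m
        · exact supN_le_norm_pow_sum_kronPow_rpow hA hn m
    _ = _ := by rw [← Real.rpow_mul (norm_nonneg _), mul_comm, Real.rpow_mul (norm_nonneg _)]

lemma norm_pow_sum_kronPow_rpow_inv_le (A : ι → Matrix (Fin d) (Fin d) ℝ) {m : ℕ} (hm : m ≠ 0)
    (hn : n ≠ 0) :
    (‖(∑ a, kronPow (A a) n) ^ m‖ ^ (m : ℝ)⁻¹) ^ (n : ℝ)⁻¹ ≤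
      (Fintype.card ι : ℝ) ^ (n : ℝ)⁻¹ * supN (‖·‖) (Set.range A) m ^ (m : ℝ)⁻¹ := by
  have hs := supN_nonneg _ A norm_nonneg m
  calc _ ≤ (((Fintype.card ι : ℝ) ^ m * supN (‖·‖) (Set.range A) m ^ n) ^ (m : ℝ)⁻¹) ^
        (n : ℝ)⁻¹ := by
        gcongr
        exact norm_pow_sum_kronPow_le A n m
    _ = _ := by
        rw [Real.mul_rpow (by positivity) (by positivity),
          Real.pow_rpow_inv_natCast (by positivity) hm, ← Real.rpow_pow_comm hs,
          Real.mul_rpow (by positivity) (by positivity),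
          Real.pow_rpow_inv_natCast (by positivity) hn]

end KronPowBounds

theorem statement19_general {d : ℕ} (r : ℕ)
    (A : Fin r → Matrix (Fin d) (Fin d) ℝ)
    (hpos : ∀ i k l, 0 ≤ A i k l)
    (n : ℕ) (hn : 1 ≤ n) :
    ((r : ℝ) ^ ((n : ℝ)⁻¹))⁻¹ * (specRad (∑ i, kronPow (A i) n)) ^ ((n : ℝ)⁻¹) ≤
      jsr opNormC (Set.range A) ∧
    jsr opNormC (Set.range A) ≤ (specRad (∑ i, kronPow (A i) n)) ^ ((n : ℝ)⁻¹) := by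
  have hn0 : n ≠ 0 := by omega
  have hgelfand : Tendsto (fun m : ℕ => (‖(∑ i, kronPow (A i) n) ^ m‖ ^ (m : ℝ)⁻¹) ^ (n : ℝ)⁻¹)
      atTop (𝓝 (specRad (∑ i, kronPow (A i) n) ^ (n : ℝ)⁻¹)) :=
    (Real.continuousAt_rpow_const _ _ (Or.inr (by positivity))).tendsto.comp
      (tendsto_norm_pow_rpow_inv_specRad _)
  rw [jsr, opNormC_eq_norm]
  refine inv_mul_le_limsup_and_limsup_le (by positivity)
    (fun m => Real.rpow_nonneg (supN_nonneg _ A norm_nonneg m) _) hgelfand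
    (Eventually.of_forall (supN_rpow_inv_le hpos hn0)) ?_
  filter_upwards [eventually_ne_atTop 0] with m hm
  simpa using norm_pow_sum_kronPow_rpow_inv_le A hm hn0

/-- for matrices with nonnegative entries,
`r^{−1/n} ρ(Σ Aᵢ^{⊗n})^{1/n} ≤ ρ(𝒜) ≤ ρ(Σ Aᵢ^{⊗n})^{1/n}`. -/
theorem statement19 {d : ℕ} (r : ℕ) (hr : 1 ≤ r)
    (A : Fin r → Matrix (Fin d) (Fin d) ℝ)
    (hpos : ∀ i k l, 0 ≤ A i k l)
    (n : ℕ) (hn : 1 ≤ n) :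
    ((r : ℝ) ^ ((n : ℝ)⁻¹))⁻¹ * (specRad (∑ i, kronPow (A i) n)) ^ ((n : ℝ)⁻¹) ≤
      jsr opNormC (Set.range A) ∧
    jsr opNormC (Set.range A) ≤ (specRad (∑ i, kronPow (A i) n)) ^ ((n : ℝ)⁻¹) :=
  statement19_general r A hpos n hn
end
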